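/- Let α be irrational and N ≥ 2 with N = first(N) + last(N). Then for every m with 0 ≤ m < last(N), the point m + first(N) is the successor of m on the circle: 0 ≤ m + first(N) < N, {m·α} < {(m + first(N))·α}, and for every i with 0 < i < N, either {i·α} ≤ {m·α} or {i·α} ≥ {(m + first(N))·α}. -/

import Mathlib

/-!
Write `x n = {n α}` and `δ = x f`, the least value on `0 < n < N`. If `0 < p - q < N` and
`x q ≤ x p`, then `x p - x q = x (p - q) ≥ δ`. Applied to `q = m`, `p = m + f` (whose value is at
least `δ`, so no wrap-around occurs) this gives `x (m + f) = x m + δ`; applied to `(m, i)` or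
`(i, m + f)` it shows that no point lies strictly between `x m` and `x m + δ`.
-/

namespace Int

variable {R : Type*} [CommRing R] [LinearOrder R] [IsStrictOrderedRing R] [FloorRing R]

theorem fract_add_eq_of_fract_le_fract_add {a b : R} (h : fract b ≤ fract (a + b)) :
    fract (a + b) = fract a + fract b := by
  obtain ⟨z, hz⟩ := fract_add a b
  have hz_nonpos : (z : R) ≤ 0 := by linarith [fract_add_le a b]
  have hz_gt : (-1 : R) < z := by linarith [fract_lt_one a]
  have hz_zero : z = 0 := by
    have : z ≤ 0 := by exact_mod_cast hz_nonpos
    have : -1 < z := by exact_mod_cast hz_gt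
    omega
  rw [hz_zero, cast_zero, sub_sub, sub_eq_zero] at hz
  exact hz

theorem fract_sub_eq_of_fract_le {a b : R} (h : fract b ≤ fract a) :
    fract (a - b) = fract a - fract b := by
  have := fract_add_eq_of_fract_le_fract_add (a := a - b) (b := b) (by rwa [sub_add_cancel])
  rw [sub_add_cancel] at this
  exact eq_sub_of_add_eq this.symm

end Int

theorem Irrational.fract_pos {x : ℝ} (hx : Irrational x) : 0 < Int.fract x :=
  (Int.fract_nonneg x).lt_of_ne fun h => hx.ne_int ⌊x⌋ (by linarith [Int.fract_add_floor x])

section FirstPoint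

variable {α : ℝ} {N f : ℕ}
  (hf : ∀ m : ℕ, 0 < m → m < N → Int.fract (f * α) ≤ Int.fract (m * α))
include hf

theorem fract_first_le_fract_sub {p q : ℕ} (hqp : q < p) (hpN : p < q + N)
    (h : Int.fract (q * α) ≤ Int.fract (p * α)) :
    Int.fract (f * α) ≤ Int.fract (p * α) - Int.fract (q * α) := by
  have hcast : ((p - q : ℕ) : ℝ) * α = p * α - q * α := by
    push_cast [Nat.cast_sub hqp.le]; ring
  rw [← Int.fract_sub_eq_of_fract_le h, ← hcast]
  exact hf _ (by omega) (by omega)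

theorem fract_add_first (hf0 : 0 < f) {m : ℕ} (hm : m + f < N) :
    Int.fract ((m + f : ℕ) * α) = Int.fract (m * α) + Int.fract (f * α) := by
  have hmf := hf (m + f) (by omega) hm
  rw [Nat.cast_add, add_mul] at hmf ⊢
  exact Int.fract_add_eq_of_fract_le_fract_add hmf

theorem fract_le_or_fract_add_first_le (hf0 : 0 < f) {m i : ℕ} (hm : m + f < N) (hiN : i < N) :
    Int.fract (i * α) ≤ Int.fract (m * α) ∨
      Int.fract ((m + f : ℕ) * α) ≤ Int.fract (i * α) := by
  by_contra! ⟨hmi, him⟩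
  have hsucc := fract_add_first hf hf0 hm
  rcases le_or_gt i m with hle | hlt
  · have := fract_first_le_fract_sub hf (q := i) (p := m + f) (by omega) (by omega) him.le
    linarith
  · have := fract_first_le_fract_sub hf (q := m) (p := i) hlt (by omega) hmi.le
    linarith

end FirstPoint

theorem successor_add_first_general (α : ℝ) (hα : Irrational α) (N : ℕ)
    (f l : ℕ) (hf0 : 0 < f)
    (hf : ∀ m : ℕ, 0 < m → m < N → Int.fract (f * α) ≤ Int.fract (m * α))
    (hNM : N = f + l) :
    ∀ m : ℕ, m < l →
      m + f < N ∧ Int.fract (m * α) < Int.fract ((m + f : ℕ) * α) ∧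
      ∀ i : ℕ, 0 < i → i < N →
        Int.fract (i * α) ≤ Int.fract (m * α) ∨
        Int.fract (i * α) ≥ Int.fract ((m + f : ℕ) * α) := by
  intro m hm
  have hmf : m + f < N := by omega
  have hδ : 0 < Int.fract (f * α) := (hα.natCast_mul hf0.ne').fract_pos
  refine ⟨hmf, ?_, fun i _ hiN => fract_le_or_fract_add_first_le hf hf0 hmf hiN⟩
  rw [fract_add_first hf hf0 hmf]
  linarith

theorem successor_add_first (α : ℝ) (hα : Irrational α) (N : ℕ) (hN : 2 ≤ N)
    (f l : ℕ) (hf0 : 0 < f) (hfN : f < N)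
    (hf : ∀ m : ℕ, 0 < m → m < N → Int.fract (f * α) ≤ Int.fract (m * α))
    (hl0 : 0 < l) (hlN : l < N)
    (hl : ∀ m : ℕ, 0 < m → m < N → Int.fract (m * α) ≤ Int.fract (l * α))
    (hNM : N = f + l) :
    ∀ m : ℕ, m < l →
      m + f < N ∧ Int.fract (m * α) < Int.fract ((m + f : ℕ) * α) ∧
      ∀ i : ℕ, 0 < i → i < N →
        Int.fract (i * α) ≤ Int.fract (m * α) ∨
        Int.fract (i * α) ≥ Int.fract ((m + f : ℕ) * α) :=
  successor_add_first_general α hα N f l hf0 hf hNM
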